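/- arXiv:2605.08900 — 3 statements merged into one kernel-verified Lean document; each statement's English description precedes it below -/
import Mathlib

section
/- Let X be a T₀ space and ℱ a family of sets of the form ↑F with F a nonempty finite subset of X. If ℱ is an irreducible subset of the Smyth power space P_S(X), then there exists an irreducible subset A of X with A ⊆ ⋃ℱ such that A ∩ ↑F ≠ ∅ for every ↑F ∈ ℱ. -/
open Set

/-- Specialization order: `x ≤ y` iff `x ∈ cl {y}`. -/
def specLE {X : Type} [TopologicalSpace X] (x y : X) : Prop := x ∈ closure {y}

/-- Upward closure w.r.t. the specialization order. -/
def upClosure {X : Type} [TopologicalSpace X] (A : Set X) : Set X :=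
  {y | ∃ a ∈ A, specLE a y}

/-- The underlying set of the Smyth power space: nonempty compact saturated subsets. -/
def SmythPS (X : Type) [TopologicalSpace X] : Type :=
  {K : Set X // K.Nonempty ∧ IsCompact K ∧ ∀ x ∈ K, ∀ y, specLE x y → y ∈ K}

/-- `□U = {K ∈ Q(X) : K ⊆ U}`. -/
def boxU {X : Type} [TopologicalSpace X] (U : Set X) : Set (SmythPS X) :=
  {K : SmythPS X | K.1 ⊆ U}

/-- The upper Vietoris topology on the Smyth power space. -/
instance smythTop (X : Type) [TopologicalSpace X] : TopologicalSpace (SmythPS X) :=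
  TopologicalSpace.generateFrom {S : Set (SmythPS X) | ∃ U : Set X, IsOpen U ∧ S = boxU U}

/-- The cut `A^δ = (A^↑)^↓` w.r.t. the specialization order. -/
def cutD {X : Type} [TopologicalSpace X] (A : Set X) : Set X :=
  {x | ∀ u : X, (∀ a ∈ A, specLE a u) → specLE x u}

/-- `U` is SI₂-open. -/
def SI2Open {X : Type} [TopologicalSpace X] (U : Set X) : Prop :=
  IsOpen U ∧ ∀ F : Set X, IsIrreducible F → (cutD F ∩ U).Nonempty → (F ∩ U).Nonempty

/-- `le` makes `I` the index of a net: nonempty, reflexive, transitive, directed. -/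
def IsNetOrder {I : Type} (le : I → I → Prop) : Prop :=
  Nonempty I ∧ (∀ i, le i i) ∧ (∀ i j k, le i j → le j k → le i k) ∧
    (∀ i j, ∃ k, le i k ∧ le j k)

/-- GSI₂-convergence of the net `xi` (indexed by `(I, le)`) to `x`. -/
def GSI2Conv {X : Type} [TopologicalSpace X] {I : Type} (le : I → I → Prop)
    (xi : I → X) (x : X) : Prop :=
  ∃ 𝒢 : Set (Set X), (∀ G ∈ 𝒢, G.Finite ∧ G.Nonempty) ∧
    IsIrreducible {K : SmythPS X | ∃ G ∈ 𝒢, K.1 = upClosure G} ∧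
    (∀ U : Set X, IsOpen U → (∃ G ∈ 𝒢, upClosure G ⊆ U) →
      ∃ i₀, ∀ i, le i₀ i → xi i ∈ U) ∧
    (⋂ G ∈ 𝒢, upClosure G) ⊆ upClosure {x}

/-- `A ≪_{I₂} B`. -/
def WayBelowI2 {X : Type} [TopologicalSpace X] (A B : Set X) : Prop :=
  ∀ D : Set X, IsIrreducible D → (cutD D ∩ B).Nonempty → (A ∩ closure D).Nonempty

/-- `w(x) = {↑F : F nonempty finite, F ≪_{I₂} x}` as a subset of the Smyth power space. -/
def wPS {X : Type} [TopologicalSpace X] (x : X) : Set (SmythPS X) :=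
  {K : SmythPS X | ∃ F : Set X, F.Finite ∧ F.Nonempty ∧ WayBelowI2 F {x} ∧ K.1 = upClosure F}

/-- QI₂-continuity. -/
def QI2Continuous (X : Type) [TopologicalSpace X] : Prop :=
  ∀ x : X, IsIrreducible (wPS x) ∧ upClosure {x} = ⋂ K ∈ wPS x, (K.1 : Set X)

/-- Strong QI₂-continuity. -/
def StronglyQI2Continuous (X : Type) [TopologicalSpace X] : Prop :=
  QI2Continuous X ∧
  ∀ (F : Set X) (x : X) (U : Set X), F.Finite → F.Nonempty → WayBelowI2 F {x} →
    IsOpen U → F ⊆ U → ∃ W : Set X, SI2Open W ∧ x ∈ W ∧ W ⊆ U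

/- Topological Rudin lemma: a minimal closed set meeting every member of an irreducible family of
compact saturated sets exists by Zorn's lemma (compactness passes to intersections of chains), and
it is irreducible, because a box `□ (C \ U)ᶜ` catching some member of the family is open in the
upper Vietoris topology. The set `A` is that closed set cut down to `⋃ ℱ`, which is dense in it. -/

theorem IsCompact.inter_sInter_nonempty_of_isChain {X : Type*} [TopologicalSpace X]
    {s : Set X} (hs : IsCompact s) {t : Set (Set X)} (hne : t.Nonempty)
    (hchain : IsChain (· ⊆ ·) t) (hclosed : ∀ c ∈ t, IsClosed c)
    (hmeet : ∀ c ∈ t, (s ∩ c).Nonempty) : (s ∩ ⋂₀ t).Nonempty := by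
  have : Nonempty t := hne.to_subtype
  rw [sInter_eq_iInter, nonempty_iff_ne_empty]
  intro hempty
  obtain ⟨c, hc⟩ := hs.elim_directed_family_closed (fun c : t => c.1) (fun c => hclosed c c.2)
    hempty (IsChain.directed (f := id) hchain.symm)
  exact (hmeet c c.2).ne_empty hc

theorem isOpen_boxU {X : Type} [TopologicalSpace X] {U : Set X} (hU : IsOpen U) :
    IsOpen (boxU U) :=
  TopologicalSpace.GenerateOpen.basic _ ⟨U, hU, rfl⟩

namespace SmythPS

variable {X : Type} [TopologicalSpace X]

def IsClosedHittingSet (ℱ : Set (SmythPS X)) (C : Set X) : Prop :=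
  IsClosed C ∧ ∀ K ∈ ℱ, (C ∩ K.1).Nonempty

theorem exists_minimal_isClosedHittingSet (ℱ : Set (SmythPS X)) :
    ∃ C, Minimal (IsClosedHittingSet ℱ) C := by
  have huniv : IsClosedHittingSet ℱ univ :=
    ⟨isClosed_univ, fun K _ => by simpa only [univ_inter] using K.2.1⟩
  obtain ⟨C, -, hC⟩ := zorn_superset_nonempty {C | IsClosedHittingSet ℱ C}
    (fun c hc hchain hne => ⟨⋂₀ c,
      ⟨isClosed_sInter fun C hC => (hc hC).1, fun K hK => by
        simpa only [inter_comm] using K.2.2.1.inter_sInter_nonempty_of_isChain hne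
          hchain (fun C hC => (hc hC).1)
          (fun C hC => by simpa only [inter_comm] using (hc hC).2 K hK)⟩,
      fun _ => sInter_subset_of_mem⟩) univ huniv
  exact ⟨C, hC⟩

variable {ℱ : Set (SmythPS X)} {C : Set X}

theorem exists_mem_boxU_compl_diff (hC : Minimal (IsClosedHittingSet ℱ) C) {U : Set X}
    (hU : IsOpen U) (hCU : (C ∩ U).Nonempty) : ∃ K ∈ ℱ, K ∈ boxU (C \ U)ᶜ := by
  by_contra! hmiss
  have hhit : IsClosedHittingSet ℱ (C \ U) := ⟨hC.prop.1.sdiff hU, fun K hK => by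
    obtain ⟨x, hxK, hx⟩ := not_subset.1 (hmiss K hK)
    exact ⟨x, not_not.1 hx, hxK⟩⟩
  obtain ⟨x, hxC, hxU⟩ := hCU
  exact (hC.eq_of_subset hhit sdiff_subset ▸ hxC).2 hxU

theorem isIrreducible_of_minimal_isClosedHittingSet (hℱ : IsIrreducible ℱ)
    (hC : Minimal (IsClosedHittingSet ℱ) C) : IsIrreducible C := by
  obtain ⟨K₀, hK₀⟩ := hℱ.nonempty
  refine ⟨(hC.prop.2 K₀ hK₀).mono inter_subset_left, fun U V hU hV hCU hCV => ?_⟩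
  have hboxU := isOpen_boxU (hC.prop.1.sdiff hU).isOpen_compl
  have hboxV := isOpen_boxU (hC.prop.1.sdiff hV).isOpen_compl
  obtain ⟨K, hK, hKU, hKV⟩ := hℱ.2 _ _ hboxU hboxV
    (exists_mem_boxU_compl_diff hC hU hCU) (exists_mem_boxU_compl_diff hC hV hCV)
  obtain ⟨x, hxC, hxK⟩ := hC.prop.2 K hK
  exact ⟨x, hxC, not_not.1 fun hx => hKU hxK ⟨hxC, hx⟩, not_not.1 fun hx => hKV hxK ⟨hxC, hx⟩⟩

theorem closure_inter_biUnion_eq (hC : Minimal (IsClosedHittingSet ℱ) C) :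
    closure (C ∩ ⋃ K ∈ ℱ, K.1) = C := by
  have hsub : closure (C ∩ ⋃ K ∈ ℱ, K.1) ⊆ C := hC.prop.1.closure_subset_iff.2 inter_subset_left
  refine hC.eq_of_subset ⟨isClosed_closure, fun K hK => ?_⟩ hsub
  obtain ⟨x, hxC, hxK⟩ := hC.prop.2 K hK
  exact ⟨x, subset_closure ⟨hxC, mem_biUnion hK hxK⟩, hxK⟩

end SmythPS

theorem stmt7_general {X : Type} [TopologicalSpace X] (ℱ : Set (SmythPS X))
    (hirr : IsIrreducible ℱ) :
    ∃ A : Set X, IsIrreducible A ∧ A ⊆ (⋃ K ∈ ℱ, (K.1 : Set X)) ∧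
      ∀ K ∈ ℱ, (A ∩ K.1).Nonempty := by
  obtain ⟨C, hC⟩ := SmythPS.exists_minimal_isClosedHittingSet ℱ
  refine ⟨C ∩ ⋃ K ∈ ℱ, K.1, ?_, inter_subset_right, fun K hK => ?_⟩
  · rw [← isIrreducible_iff_closure, SmythPS.closure_inter_biUnion_eq hC]
    exact SmythPS.isIrreducible_of_minimal_isClosedHittingSet hirr hC
  · obtain ⟨x, hxC, hxK⟩ := hC.prop.2 K hK
    exact ⟨x, ⟨hxC, mem_biUnion hK hxK⟩, hxK⟩

theorem stmt7 {X : Type} [TopologicalSpace X] [T0Space X] (ℱ : Set (SmythPS X))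
    (hfin : ∀ K ∈ ℱ, ∃ F : Set X, F.Finite ∧ F.Nonempty ∧ K.1 = upClosure F)
    (hirr : IsIrreducible ℱ) :
    ∃ A : Set X, IsIrreducible A ∧ A ⊆ (⋃ K ∈ ℱ, (K.1 : Set X)) ∧
      ∀ K ∈ ℱ, (A ∩ K.1).Nonempty :=
  stmt7_general ℱ hirr
end

section
/- Let X be a T₀ space and 𝒦 an irreducible subset of the Smyth power space P_S(X). If U is an open set of X with K \ U ≠ ∅ for every K ∈ 𝒦, then {↑(K \ U) : K ∈ 𝒦} is an irreducible subset of P_S(X). -/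
open Set

/-! The map `K ↦ ↑(K \ U)` is continuous on the set of `K` with `K \ U ≠ ∅`: for open `V`,
`↑(K \ U) ⊆ V` iff `K ⊆ U ∪ V`, so the preimage of `□V` is the trace of `□(U ∪ V)`.
Continuous images of irreducible sets are irreducible. -/

section Saturation

variable {X : Type} [TopologicalSpace X]

lemma specLE_iff_specializes {x y : X} : specLE x y ↔ y ⤳ x :=
  specializes_iff_mem_closure.symm

lemma specLE_trans {x y z : X} (hxy : specLE x y) (hyz : specLE y z) : specLE x z :=
  specLE_iff_specializes.2 <|
    (specLE_iff_specializes.1 hyz).trans (specLE_iff_specializes.1 hxy)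

lemma subset_upClosure (A : Set X) : A ⊆ upClosure A :=
  fun a ha => ⟨a, ha, specLE_iff_specializes.2 specializes_rfl⟩

lemma upClosure_subset_iff_of_isOpen {A V : Set X} (hV : IsOpen V) :
    upClosure A ⊆ V ↔ A ⊆ V := by
  refine ⟨(subset_upClosure A).trans, ?_⟩
  rintro hAV y ⟨a, ha, hay⟩
  exact (specLE_iff_specializes.1 hay).mem_open hV (hAV ha)

lemma isCompact_upClosure {A : Set X} (hA : IsCompact A) : IsCompact (upClosure A) := by
  refine isCompact_of_finite_subcover fun W hW hcov => ?_
  obtain ⟨t, ht⟩ := hA.elim_finite_subcover W hW ((subset_upClosure A).trans hcov)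
  exact ⟨t, (upClosure_subset_iff_of_isOpen (isOpen_biUnion fun i _ => hW i)).2 ht⟩

lemma specLE_mem_upClosure {A : Set X} {x y : X} (hx : x ∈ upClosure A) (hxy : specLE x y) :
    y ∈ upClosure A := by
  obtain ⟨a, ha, hax⟩ := hx
  exact ⟨a, ha, specLE_trans hax hxy⟩

end Saturation

namespace SmythPS

variable {X : Type} [TopologicalSpace X]

lemma isOpen_boxU {V : Set X} (hV : IsOpen V) : IsOpen (boxU V) :=
  TopologicalSpace.GenerateOpen.basic _ ⟨V, hV, rfl⟩

open Classical in
/-- `↑(K \ U)`, with the junk value `K` when `K ⊆ U`. -/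
noncomputable def upDiff {U : Set X} (hU : IsOpen U) (K : SmythPS X) : SmythPS X :=
  if h : (K.1 \ U).Nonempty then
    (⟨upClosure (K.1 \ U), h.mono (subset_upClosure _), isCompact_upClosure (K.2.2.1.diff hU),
      fun _ hx _ hxy => specLE_mem_upClosure hx hxy⟩ : SmythPS X)
  else K

lemma upDiff_val {U : Set X} (hU : IsOpen U) {K : SmythPS X} (hK : (K.1 \ U).Nonempty) :
    (upDiff hU K).1 = upClosure (K.1 \ U) :=
  congrArg Subtype.val (dif_pos hK)

lemma continuousOn_upDiff {U : Set X} (hU : IsOpen U) :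
    ContinuousOn (upDiff hU) {K | (K.1 \ U).Nonempty} := by
  rw [continuousOn_iff_continuous_domRestrict, continuous_generateFrom_iff]
  rintro _ ⟨V, hV, rfl⟩
  have hpre : domRestrict {K | (K.1 \ U).Nonempty} (upDiff hU) ⁻¹' boxU V =
      Subtype.val ⁻¹' boxU (U ∪ V) := by
    ext ⟨K, hK⟩
    change (upDiff hU K).1 ⊆ V ↔ K.1 ⊆ U ∪ V
    rw [upDiff_val hU hK, upClosure_subset_iff_of_isOpen hV, sdiff_subset_iff]
  rw [hpre]
  exact (isOpen_boxU (hU.union hV)).preimage continuous_subtype_val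

end SmythPS

theorem stmt9_general {X : Type} [TopologicalSpace X] (𝒦 : Set (SmythPS X))
    (h𝒦 : IsIrreducible 𝒦) (U : Set X) (hU : IsOpen U)
    (hmeet : ∀ K ∈ 𝒦, (K.1 \ U).Nonempty) :
    IsIrreducible {L : SmythPS X | ∃ K ∈ 𝒦, L.1 = upClosure (K.1 \ U)} := by
  have himage : {L : SmythPS X | ∃ K ∈ 𝒦, L.1 = upClosure (K.1 \ U)} =
      SmythPS.upDiff hU '' 𝒦 := by
    ext L
    refine exists_congr fun K => and_congr_right fun hK => ?_
    rw [← SmythPS.upDiff_val hU (hmeet K hK), eq_comm]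
    exact Subtype.ext_iff.symm
  rw [himage]
  exact h𝒦.image _ ((SmythPS.continuousOn_upDiff hU).mono hmeet)

theorem stmt9 {X : Type} [TopologicalSpace X] [T0Space X] (𝒦 : Set (SmythPS X))
    (h𝒦 : IsIrreducible 𝒦) (U : Set X) (hU : IsOpen U)
    (hmeet : ∀ K ∈ 𝒦, (K.1 \ U).Nonempty) :
    IsIrreducible {L : SmythPS X | ∃ K ∈ 𝒦, L.1 = upClosure (K.1 \ U)} :=
  stmt9_general 𝒦 h𝒦 U hU hmeet
end

section
/- Let X be a T₀ space, U an SI₂-open set, x ∈ X, and ℱ = {↑F : F nonempty finite ⊆ X} an irreducible subset of the Smyth power space P_S(X). If ⋂ℱ ⊆ ↑x ⊆ U, then ↑F ⊆ U for some ↑F ∈ ℱ. -/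
/-!
Suppose no member of `ℱ` lies in `U`. Then the closed set `Uᶜ` meets every member of `ℱ`, and by
Zorn's lemma (the members being compact) it contains a minimal closed set `A` with this property.
This is the topological Rudin lemma: irreducibility of `ℱ` in the upper Vietoris topology makes `A`
irreducible. Since the members of `ℱ` are saturated and meet `A`, every upper bound of `A` lies in
`⋂ ℱ ⊆ ↑x`, so `x ∈ A^δ ∩ U`. As `U` is SI₂-open, `A` meets `U`, contradicting `A ⊆ Uᶜ`.
-/

open Set

section

variable {X : Type} [TopologicalSpace X]

theorem isOpen_boxU_s11 {W : Set X} (hW : IsOpen W) : IsOpen (boxU W) :=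
  TopologicalSpace.GenerateOpen.basic _ ⟨W, hW, rfl⟩

theorem specLE_refl (x : X) : specLE x x :=
  subset_closure rfl

def IsClosedHittingSet (ℱ : Set (SmythPS X)) (A : Set X) : Prop :=
  IsClosed A ∧ ∀ K ∈ ℱ, (K.1 ∩ A).Nonempty

variable {ℱ : Set (SmythPS X)}

theorem exists_minimal_isClosedHittingSet_subset {C : Set X} (hC : IsClosedHittingSet ℱ C) :
    ∃ A ⊆ C, Minimal (IsClosedHittingSet ℱ) A := by
  refine zorn_superset_nonempty {A | IsClosedHittingSet ℱ A} ?_ C hC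
  intro c hcS hchain hcne
  have hclosed : ∀ D ∈ c, IsClosed D := fun D hD => (hcS hD).1
  refine ⟨⋂₀ c, ⟨isClosed_sInter hclosed, fun K hK => ?_⟩, fun D hD => sInter_subset_of_mem hD⟩
  by_contra hempty
  rw [not_nonempty_iff_eq_empty, sInter_eq_iInter] at hempty
  have := hcne.to_subtype
  have hdir : DirectedOn (· ⊇ ·) c := hchain.symm.directedOn (r := fun A B : Set X => A ⊇ B)
  obtain ⟨D, hD⟩ := K.2.2.1.elim_directed_family_closed (fun D : c => (D : Set X))
    (fun D => hclosed D D.2) hempty (directedOn_iff_directed.1 hdir)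
  exact (hcS D.2).2 K hK |>.ne_empty hD

theorem Minimal.exists_inter_subset_of_isClosedHittingSet {A V : Set X}
    (hA : Minimal (IsClosedHittingSet ℱ) A) (hV : IsOpen V) (hAV : (A ∩ V).Nonempty) :
    ∃ K ∈ ℱ, K.1 ⊆ (A \ V)ᶜ := by
  by_contra! hbad
  have hdiff : IsClosedHittingSet ℱ (A \ V) :=
    ⟨hA.prop.1.sdiff hV, fun K hK =>
      not_subset.1 (hbad K hK) |>.imp fun _ h => ⟨h.1, not_not.1 h.2⟩⟩
  obtain ⟨a, haA, haV⟩ := hAV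
  exact (hA.le_of_le hdiff sdiff_subset haA).2 haV

theorem Minimal.isIrreducible_of_isClosedHittingSet {A : Set X} (hirr : IsIrreducible ℱ)
    (hA : Minimal (IsClosedHittingSet ℱ) A) : IsIrreducible A := by
  obtain ⟨K₀, hK₀⟩ := hirr.nonempty
  refine ⟨(hA.prop.2 K₀ hK₀).mono inter_subset_right, fun V₁ V₂ hV₁ hV₂ hAV₁ hAV₂ => ?_⟩
  obtain ⟨K₁, hK₁, hK₁V⟩ := hA.exists_inter_subset_of_isClosedHittingSet hV₁ hAV₁
  obtain ⟨K₂, hK₂, hK₂V⟩ := hA.exists_inter_subset_of_isClosedHittingSet hV₂ hAV₂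
  obtain ⟨K, hK, hKV₁, hKV₂⟩ := hirr.2 _ _
    (isOpen_boxU_s11 (hA.prop.1.sdiff hV₁).isOpen_compl)
    (isOpen_boxU_s11 (hA.prop.1.sdiff hV₂).isOpen_compl) ⟨K₁, hK₁, hK₁V⟩ ⟨K₂, hK₂, hK₂V⟩
  obtain ⟨a, haK, haA⟩ := hA.prop.2 K hK
  exact ⟨a, haA, by_contra fun h => hKV₁ haK ⟨haA, h⟩, by_contra fun h => hKV₂ haK ⟨haA, h⟩⟩

theorem mem_iInter_of_upperBound {A : Set X} (hA : ∀ K ∈ ℱ, (K.1 ∩ A).Nonempty) {u : X}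
    (hu : ∀ a ∈ A, specLE a u) : u ∈ ⋂ K ∈ ℱ, (K.1 : Set X) :=
  mem_iInter₂.2 fun K hK =>
    let ⟨a, haK, haA⟩ := hA K hK
    K.2.2.2 a haK u (hu a haA)

end

theorem stmt11_general {X : Type} [TopologicalSpace X] (U : Set X)
    (hU : SI2Open U) (x : X) (ℱ : Set (SmythPS X))
    (hirr : IsIrreducible ℱ)
    (hsub : (⋂ K ∈ ℱ, (K.1 : Set X)) ⊆ upClosure {x})
    (hxU : upClosure {x} ⊆ U) :
    ∃ K ∈ ℱ, K.1 ⊆ U := by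
  by_contra! hcon
  obtain ⟨A, hAU, hA⟩ := exists_minimal_isClosedHittingSet_subset (ℱ := ℱ) (C := Uᶜ)
    ⟨hU.1.isClosed_compl, fun K hK => not_subset.1 (hcon K hK)⟩
  have hxA : x ∈ cutD A := fun u hu => by
    obtain ⟨y, rfl, hyu⟩ := hsub (mem_iInter_of_upperBound hA.prop.2 hu)
    exact hyu
  obtain ⟨a, haA, haU⟩ :=
    hU.2 A (hA.isIrreducible_of_isClosedHittingSet hirr) ⟨x, hxA, hxU ⟨x, rfl, specLE_refl x⟩⟩
  exact hAU haA haU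

theorem stmt11 {X : Type} [TopologicalSpace X] [T0Space X] (U : Set X)
    (hU : SI2Open U) (x : X) (ℱ : Set (SmythPS X))
    (hfin : ∀ K ∈ ℱ, ∃ F : Set X, F.Finite ∧ F.Nonempty ∧ K.1 = upClosure F)
    (hirr : IsIrreducible ℱ)
    (hsub : (⋂ K ∈ ℱ, (K.1 : Set X)) ⊆ upClosure {x})
    (hxU : upClosure {x} ⊆ U) :
    ∃ K ∈ ℱ, K.1 ⊆ U :=
  stmt11_general U hU x ℱ hirr hsub hxU
end
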